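/- arXiv:1005.2769 — 4 statements merged into one kernel-verified Lean document; each statement's English description precedes it below -/
import Mathlib

section
/- Let Φ be a root system of a finite Weyl group W, and let α₁,...,α_k ∈ Φ. The product of reflections s_{α₁}s_{α₂}⋯s_{α_k} has Carter length exactly k (i.e., it cannot be written as a product of fewer than k reflections in W) if and only if the roots α₁,...,α_k are linearly independent. -/
/-!
If the roots are linearly independent, the fixed space of `w = s_{α₁} ⋯ s_{α_k}` is exactly
their orthogonal complement, of codimension `k`, whereas any product of `m` reflections fixes
the orthogonal complement of its `m` roots; hence `k ≤ m`.

Conversely (Carter's Lemma 2), every `w ≠ 1` in the Weyl group has a root `γ` orthogonal to its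
fixed space: otherwise the fixed space contains a regular vector `t`, and an element fixing a
regular vector is trivial, by the exchange condition for the simple roots of the positive system
cut out by `t`. Multiplying by `s_γ` strictly enlarges the fixed space, so `w` is a product of
`codim Fix w` root reflections. For dependent roots `codim Fix w ≤ dim span α < k`.
-/

open scoped RealInnerProductSpace

/-- Reflection in the hyperplane orthogonal to the root `γ`, as a self-map of `V`. -/
noncomputable def sRefl {V : Type*} [NormedAddCommGroup V] [InnerProductSpace ℝ V]
    (γ : V) : Function.End V :=
  fun x => x - (2 * ⟪x, γ⟫ / ⟪γ, γ⟫) • γ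

/-- `Φ` is a root system in the Euclidean space `V`. -/
structure IsRootSystem {V : Type*} [NormedAddCommGroup V] [InnerProductSpace ℝ V]
    (Φ : Set V) : Prop where
  finite : Φ.Finite
  zero_not_mem : (0 : V) ∉ Φ
  span_top : Submodule.span ℝ Φ = ⊤
  neg_mem : ∀ α ∈ Φ, -α ∈ Φ
  refl_mem : ∀ α ∈ Φ, ∀ β ∈ Φ, sRefl α β ∈ Φ
  integral : ∀ α ∈ Φ, ∀ β ∈ Φ, ∃ n : ℤ, 2 * ⟪β, α⟫ / ⟪α, α⟫ = (n : ℝ)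

open Module Submodule Set

section Reflections

variable {V : Type*} [NormedAddCommGroup V] [InnerProductSpace ℝ V]

theorem sRefl_apply (γ x : V) : sRefl γ x = x - (2 * ⟪x, γ⟫ / ⟪γ, γ⟫) • γ := rfl

noncomputable def rootRefl (γ : V) : V ≃ₗᵢ[ℝ] V := (ℝ ∙ γ)ᗮ.reflection

theorem rootRefl_apply (γ x : V) : rootRefl γ x = x - (2 * ⟪x, γ⟫ / ⟪γ, γ⟫) • γ := by
  rw [rootRefl, reflection_orthogonal_apply, reflection_singleton_apply,
    real_inner_self_eq_norm_sq, real_inner_comm]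
  simp only [RCLike.ofReal_real_eq_id, id, neg_sub]
  module

theorem coe_rootRefl (γ : V) : ⇑(rootRefl γ) = sRefl γ :=
  funext (rootRefl_apply γ)

@[simp] theorem rootRefl_mul_self (γ : V) : rootRefl γ * rootRefl γ = 1 :=
  reflection_mul_reflection _

@[simp] theorem rootRefl_apply_self (γ : V) : rootRefl γ γ = -γ :=
  reflection_orthogonalComplement_singleton_eq_neg γ

@[simp] theorem rootRefl_rootRefl (γ x : V) : rootRefl γ (rootRefl γ x) = x :=
  reflection_reflection _ x

theorem rootRefl_apply_eq_self_iff {γ x : V} : rootRefl γ x = x ↔ ⟪γ, x⟫ = 0 := by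
  rw [rootRefl, reflection_eq_self_iff, mem_orthogonal_singleton_iff_inner_right]

theorem rootRefl_eq_of_mem_span_singleton {γ δ : V} (h : γ ∈ ℝ ∙ δ) (hγ : γ ≠ 0) :
    rootRefl γ = rootRefl δ := by
  obtain ⟨r, rfl⟩ := mem_span_singleton.mp h
  have hr : r ≠ 0 := by rintro rfl; simp at hγ
  simp only [rootRefl, span_singleton_smul_eq hr.isUnit]

theorem rootRefl_neg (γ : V) : rootRefl (-γ) = rootRefl γ := by
  rcases eq_or_ne γ 0 with rfl | hγ
  · rw [neg_zero]
  · exact rootRefl_eq_of_mem_span_singleton (neg_mem (mem_span_singleton_self γ))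
      (neg_ne_zero.mpr hγ)

theorem mul_rootRefl (g : V ≃ₗᵢ[ℝ] V) (γ : V) : g * rootRefl γ = rootRefl (g γ) * g := by
  ext x
  simp only [LinearIsometryEquiv.coe_mul, Function.comp_apply, rootRefl_apply, map_sub, map_smul,
    LinearIsometryEquiv.inner_map_map]

theorem rootRefl_sub_apply {x y : V} (h : ‖x‖ = ‖y‖) : rootRefl (x - y) x = y :=
  reflection_sub h

end Reflections

section Words

variable {V : Type*} [NormedAddCommGroup V] [InnerProductSpace ℝ V]

noncomputable def reflProd (L : List V) : V ≃ₗᵢ[ℝ] V := (L.map rootRefl).prod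

@[simp] theorem reflProd_nil : reflProd ([] : List V) = 1 := rfl

@[simp] theorem reflProd_cons (γ : V) (L : List V) :
    reflProd (γ :: L) = rootRefl γ * reflProd L := by
  simp [reflProd]

@[simp] theorem reflProd_append (L M : List V) : reflProd (L ++ M) = reflProd L * reflProd M := by
  simp [reflProd]

theorem coe_reflProd (L : List V) : ⇑(reflProd L) = ((L.map sRefl).prod : Function.End V) := by
  induction L with
  | nil => rfl
  | cons γ L ih =>
    simp only [reflProd_cons, LinearIsometryEquiv.coe_mul, ih, coe_rootRefl, List.map_cons,
      List.prod_cons]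
    rfl

theorem prod_ofFn_sRefl {k : ℕ} (α : Fin k → V) :
    (List.ofFn fun i => sRefl (α i)).prod = ⇑(reflProd (List.ofFn α)) := by
  rw [coe_reflProd, List.map_ofFn]
  rfl

theorem prod_ofFn_sRefl_eq_iff {k m : ℕ} (α : Fin k → V) (β : Fin m → V) :
    (List.ofFn fun i => sRefl (β i)).prod = (List.ofFn fun i => sRefl (α i)).prod ↔
      reflProd (List.ofFn β) = reflProd (List.ofFn α) := by
  rw [prod_ofFn_sRefl, prod_ofFn_sRefl]
  exact DFunLike.coe_fn_eq

theorem sub_reflProd_ofFn_mem_span {k : ℕ} (α : Fin k → V) (x : V) :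
    x - reflProd (List.ofFn α) x ∈ span ℝ (range α) := by
  induction α using Fin.consInduction with
  | elim0 => simp
  | cons a α ih =>
    set y := reflProd (List.ofFn α) x
    rw [List.ofFn_cons, reflProd_cons, LinearIsometryEquiv.coe_mul, Function.comp_apply,
      rootRefl_apply, Fin.range_cons, span_insert,
      show x - (y - (2 * ⟪y, a⟫ / ⟪a, a⟫) • a) = (2 * ⟪y, a⟫ / ⟪a, a⟫) • a + (x - y) by abel]
    exact add_mem_sup (smul_mem _ _ (mem_span_singleton_self _)) ih

end Words

section FixedSpace

variable {V : Type*} [NormedAddCommGroup V] [InnerProductSpace ℝ V]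

noncomputable def fixedSpace (w : V ≃ₗᵢ[ℝ] V) : Submodule ℝ V :=
  LinearMap.ker (LinearMap.id - (w.toLinearEquiv : V →ₗ[ℝ] V))

theorem mem_fixedSpace {w : V ≃ₗᵢ[ℝ] V} {x : V} : x ∈ fixedSpace w ↔ w x = x := by
  simp only [fixedSpace, LinearMap.mem_ker, LinearMap.sub_apply, LinearMap.id_apply,
    LinearEquiv.coe_coe, LinearIsometryEquiv.coe_toLinearEquiv, sub_eq_zero]
  exact eq_comm

theorem range_id_sub_eq_orthogonal_fixedSpace [FiniteDimensional ℝ V] (w : V ≃ₗᵢ[ℝ] V) :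
    LinearMap.range (LinearMap.id - (w.toLinearEquiv : V →ₗ[ℝ] V)) = (fixedSpace w)ᗮ := by
  refine eq_of_le_of_finrank_le ?_ ?_
  · rintro _ ⟨x, rfl⟩
    refine (mem_orthogonal _ _).mpr fun y hy => ?_
    have := w.inner_map_map y x
    rw [mem_fixedSpace.mp hy] at this
    simp [inner_sub_right, this]
  · have := LinearMap.finrank_range_add_finrank_ker (LinearMap.id - (w.toLinearEquiv : V →ₗ[ℝ] V))
    have := (fixedSpace w).finrank_add_finrank_orthogonal
    rw [fixedSpace] at *
    omega

theorem fixedSpace_lt_fixedSpace_rootRefl_mul [FiniteDimensional ℝ V] {w : V ≃ₗᵢ[ℝ] V} {γ : V}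
    (hγ : γ ∈ (fixedSpace w)ᗮ) (hγ0 : γ ≠ 0) : fixedSpace w < fixedSpace (rootRefl γ * w) := by
  obtain ⟨x, rfl⟩ : γ ∈ LinearMap.range _ := (range_id_sub_eq_orthogonal_fixedSpace w).ge hγ
  simp only [LinearMap.sub_apply, LinearMap.id_apply, LinearEquiv.coe_coe,
    LinearIsometryEquiv.coe_toLinearEquiv] at hγ hγ0 ⊢
  refine SetLike.lt_iff_le_and_exists.mpr ⟨fun y hy => ?_, x, ?_, ?_⟩
  · rw [mem_fixedSpace, LinearIsometryEquiv.coe_mul, Function.comp_apply, mem_fixedSpace.mp hy,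
      rootRefl_apply_eq_self_iff]
    exact inner_left_of_mem_orthogonal hy hγ
  · -- `x` and `w x` have the same length, so the reflection in `x - w x` swaps them
    rw [mem_fixedSpace, LinearIsometryEquiv.coe_mul, Function.comp_apply,
      ← congrArg (rootRefl (x - w x)) (rootRefl_sub_apply (w.norm_map x).symm), rootRefl_rootRefl]
  · rw [mem_fixedSpace]
    exact fun h => hγ0 (by rw [h, sub_self])

theorem finrank_le_finrank_span_add_finrank_fixedSpace [FiniteDimensional ℝ V] {k : ℕ}
    (α : Fin k → V) : finrank ℝ V ≤
      finrank ℝ (span ℝ (range α)) + finrank ℝ (fixedSpace (reflProd (List.ofFn α))) := by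
  let T := LinearMap.id - ((reflProd (List.ofFn α)).toLinearEquiv : V →ₗ[ℝ] V)
  have hT : LinearMap.range T ≤ span ℝ (range α) := by
    rintro _ ⟨x, rfl⟩
    exact sub_reflProd_ofFn_mem_span α x
  have := LinearMap.finrank_range_add_finrank_ker T
  have := finrank_mono hT
  change _ ≤ _ + finrank ℝ (LinearMap.ker T)
  omega

theorem span_le_orthogonal_fixedSpace_of_linearIndependent {k : ℕ} {α : Fin k → V}
    (hα : LinearIndependent ℝ α) :
    span ℝ (range α) ≤ (fixedSpace (reflProd (List.ofFn α)))ᗮ := by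
  induction α using Fin.consInduction with
  | elim0 => simp
  | cons a α ih =>
    rw [linearIndependent_finCons] at hα
    have ha0 : a ≠ 0 := fun h => hα.2 (h ▸ zero_mem _)
    set w := reflProd (List.ofFn α)
    have key : ∀ x ∈ fixedSpace (rootRefl a * w), x ∈ fixedSpace w ∧ ⟪a, x⟫ = 0 := by
      intro x hx
      rw [mem_fixedSpace, LinearIsometryEquiv.coe_mul, Function.comp_apply, rootRefl_apply] at hx
      set c := 2 * ⟪w x, a⟫ / ⟪a, a⟫
      -- `x - w x` lies in the span of the later roots, but it is a multiple of `a`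
      have hc : c = 0 := by
        by_contra hc
        refine hα.2 ((smul_mem_iff _ (neg_ne_zero.mpr hc)).mp ?_)
        convert sub_reflProd_ofFn_mem_span α x using 1
        calc (-c) • a = (w x - c • a) - w x := by module
          _ = x - w x := by rw [hx]
      have hwx : w x = x := by simpa [hc] using hx
      refine ⟨mem_fixedSpace.mpr hwx, ?_⟩
      rw [← hwx, real_inner_comm]
      simpa [c, inner_self_eq_zero, ha0] using hc
    rw [List.ofFn_cons, reflProd_cons, Fin.range_cons, span_insert]
    refine sup_le ?_ ((ih hα.1).trans (orthogonal_le fun x hx => (key x hx).1))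
    rw [span_singleton_le_iff_mem, mem_orthogonal']
    exact fun x hx => (key x hx).2

end FixedSpace

theorem Set.Finite.induction_on_lt {α β : Type*} [LinearOrder β] {s : Set α} (hs : s.Finite)
    (f : α → β) {P : α → Prop} (h : ∀ a ∈ s, (∀ b ∈ s, f b < f a → P b) → P a) :
    ∀ a ∈ s, P a := by
  by_contra! hne
  obtain ⟨a, ⟨has, hPa⟩, hmin⟩ :=
    Set.exists_min_image {a ∈ s | ¬P a} f (hs.subset (sep_subset _ _)) hne
  exact hPa (h a has fun b hb hlt => by_contra fun hPb => (hmin b ⟨hb, hPb⟩).not_gt hlt)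

section Closure

variable {V : Type*} [NormedAddCommGroup V] [InnerProductSpace ℝ V] {S : Set V} {u v : V}

theorem inner_nonpos_of_mem_closure (hS : ∀ s ∈ S, ⟪s, u⟫ ≤ 0)
    (hv : v ∈ AddSubmonoid.closure S) : ⟪v, u⟫ ≤ 0 := by
  induction hv using AddSubmonoid.closure_induction with
  | mem s hs => exact hS s hs
  | zero => simp
  | add x y _ _ hx hy => rw [inner_add_left]; linarith

theorem inner_pos_of_mem_closure (hS : ∀ s ∈ S, 0 < ⟪s, u⟫)
    (hv : v ∈ AddSubmonoid.closure S) (hv0 : v ≠ 0) : 0 < ⟪v, u⟫ := by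
  suffices v = 0 ∨ 0 < ⟪v, u⟫ from this.resolve_left hv0
  clear hv0
  induction hv using AddSubmonoid.closure_induction with
  | mem s hs => exact .inr (hS s hs)
  | zero => exact .inl rfl
  | add x y _ _ hx hy =>
    rcases hx with rfl | hx
    · simpa using hy
    rcases hy with rfl | hy
    · simpa using Or.inr hx
    · exact .inr (by rw [inner_add_left]; linarith)

end Closure

namespace IsRootSystem

variable {V : Type*} [NormedAddCommGroup V] [InnerProductSpace ℝ V] {Φ : Set V}
  (hΦ : IsRootSystem Φ)
include hΦ

theorem ne_zero {γ : V} (hγ : γ ∈ Φ) : γ ≠ 0 :=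
  fun h => hΦ.zero_not_mem (h ▸ hγ)

theorem rootRefl_apply_mem {γ δ : V} (hγ : γ ∈ Φ) (hδ : δ ∈ Φ) : rootRefl γ δ ∈ Φ := by
  rw [coe_rootRefl]
  exact hΦ.refl_mem γ hγ δ hδ

theorem reflProd_apply_mem {L : List V} (hL : ∀ γ ∈ L, γ ∈ Φ) {x : V} (hx : x ∈ Φ) :
    reflProd L x ∈ Φ := by
  induction L with
  | nil => exact hx
  | cons γ L ih =>
    rw [List.forall_mem_cons] at hL
    rw [reflProd_cons, LinearIsometryEquiv.coe_mul, Function.comp_apply]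
    exact hΦ.rootRefl_apply_mem hL.1 (ih hL.2)

/-- The crystallographic condition, via Cauchy–Schwarz, leaves only the Cartan integers
`⟨α, β^∨⟩ = 1`, `⟨β, α^∨⟩ = 1` or both equal to `2`, and the last case forces `α = β`. -/
theorem sub_mem_of_inner_pos {α β : V} (hα : α ∈ Φ) (hβ : β ∈ Φ) (hpos : 0 < ⟪α, β⟫)
    (hne : α ≠ β) : α - β ∈ Φ := by
  obtain ⟨m, hm⟩ := hΦ.integral β hβ α hα
  obtain ⟨n, hn⟩ := hΦ.integral α hα β hβ
  rw [real_inner_comm] at hn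
  have hαα : 0 < ⟪α, α⟫ := real_inner_self_pos.mpr (hΦ.ne_zero hα)
  have hββ : 0 < ⟪β, β⟫ := real_inner_self_pos.mpr (hΦ.ne_zero hβ)
  have hm0 : 0 < m := by exact_mod_cast hm ▸ (by positivity : (0 : ℝ) < 2 * ⟪α, β⟫ / ⟪β, β⟫)
  have hn0 : 0 < n := by exact_mod_cast hn ▸ (by positivity : (0 : ℝ) < 2 * ⟪α, β⟫ / ⟪α, α⟫)
  have hmn : m * n ≤ 4 := by
    have : (m * n : ℝ) ≤ 4 := by
      rw [← hm, ← hn, div_mul_div_comm, div_le_iff₀ (by positivity)]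
      nlinarith [real_inner_mul_inner_self_le α β]
    exact_mod_cast this
  rcases eq_or_ne m 1 with rfl | hm1
  · have := hΦ.refl_mem β hβ α hα
    rwa [sRefl_apply, hm, Int.cast_one, one_smul] at this
  rcases eq_or_ne n 1 with rfl | hn1
  · have := hΦ.refl_mem α hα β hβ
    rw [sRefl_apply, real_inner_comm α β, hn, Int.cast_one, one_smul] at this
    simpa using hΦ.neg_mem _ this
  have hm2 : m = 2 := by nlinarith [show 2 ≤ m by omega, show 2 ≤ n by omega]
  have hn2 : n = 2 := by subst hm2; omega
  subst hm2 hn2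
  rw [div_eq_iff hββ.ne'] at hm
  rw [div_eq_iff hαα.ne'] at hn
  have : ⟪α - β, α - β⟫ = 0 := by
    simp only [inner_sub_left, inner_sub_right, real_inner_comm α β]
    push_cast at hm hn
    linarith
  exact absurd (sub_eq_zero.mp (inner_self_eq_zero.mp this)) hne

end IsRootSystem

section SimpleRoots

variable {V : Type*} [NormedAddCommGroup V] [InnerProductSpace ℝ V] {Φ : Set V} {t α γ : V}

/-- Simple roots of the positive system `{γ ∈ Φ | 0 < ⟪γ, t⟫}`: the positive roots that are not
a sum of two positive roots. -/
def IsSimpleRoot (Φ : Set V) (t α : V) : Prop :=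
  α ∈ Φ ∧ 0 < ⟪α, t⟫ ∧ ∀ β ∈ Φ, ∀ β' ∈ Φ, 0 < ⟪β, t⟫ → 0 < ⟪β', t⟫ → β + β' ≠ α

theorem mem_closure_isSimpleRoot (hfin : Φ.Finite) (hγ : γ ∈ Φ) (hγt : 0 < ⟪γ, t⟫) :
    γ ∈ AddSubmonoid.closure {α | IsSimpleRoot Φ t α} := by
  revert hγt
  refine hfin.induction_on_lt (P := fun γ => 0 < ⟪γ, t⟫ → γ ∈ AddSubmonoid.closure _) (⟪·, t⟫)
    (fun γ hγ ih hγt => ?_) γ hγ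
  by_cases hs : IsSimpleRoot Φ t γ
  · exact AddSubmonoid.subset_closure hs
  obtain ⟨β, hβ, β', hβ', hβt, hβ't, rfl⟩ :
      ∃ β ∈ Φ, ∃ β' ∈ Φ, 0 < ⟪β, t⟫ ∧ 0 < ⟪β', t⟫ ∧ β + β' = γ := by
    simpa [IsSimpleRoot, hγ, hγt] using hs
  rw [inner_add_left] at ih
  exact add_mem (ih β hβ (by linarith) hβt) (ih β' hβ' (by linarith) hβ't)

theorem exists_isSimpleRoot_inner_pos (hfin : Φ.Finite) (hγ : γ ∈ Φ) (hγt : 0 < ⟪γ, t⟫) :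
    ∃ α, IsSimpleRoot Φ t α ∧ 0 < ⟪γ, α⟫ := by
  by_contra! h
  have := inner_nonpos_of_mem_closure (fun α hα => (real_inner_comm γ α).trans_le (h α hα))
    (mem_closure_isSimpleRoot hfin hγ hγt)
  rw [real_inner_self_nonpos] at this
  simp [this] at hγt

namespace IsSimpleRoot

theorem exists_mem_closure_sub_mem_span (hfin : Φ.Finite) (hα : IsSimpleRoot Φ t α)
    (hγ : γ ∈ Φ) (hγt : 0 < ⟪γ, t⟫) :
    ∃ v ∈ AddSubmonoid.closure ({β | IsSimpleRoot Φ t β} \ {α}), γ - v ∈ ℝ ∙ α := by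
  have := mem_closure_isSimpleRoot hfin hγ hγt
  rw [← sdiff_union_of_subset (singleton_subset_iff.mpr hα : {α} ⊆ {β | IsSimpleRoot Φ t β}),
    AddSubmonoid.closure_union, AddSubmonoid.mem_sup] at this
  obtain ⟨v, hv, z, hz, rfl⟩ := this
  refine ⟨v, hv, ?_⟩
  rw [add_sub_cancel_left]
  exact AddSubmonoid.closure_le (S := (ℝ ∙ α).toAddSubmonoid).mpr
    (singleton_subset_iff.mpr (mem_span_singleton_self α)) hz

variable (hΦ : IsRootSystem Φ) (ht : ∀ γ ∈ Φ, ⟪γ, t⟫ ≠ 0)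
include hΦ ht

theorem inner_nonpos {β : V} (hα : IsSimpleRoot Φ t α) (hβ : IsSimpleRoot Φ t β) (hne : α ≠ β) :
    ⟪α, β⟫ ≤ 0 := by
  by_contra! hpos
  have hsub := hΦ.sub_mem_of_inner_pos hα.1 hβ.1 hpos hne
  rcases (ht _ hsub).lt_or_gt with hlt | hgt
  · refine hβ.2.2 (β - α) (by simpa using hΦ.neg_mem _ hsub) α hα.1 ?_ hα.2.1 (sub_add_cancel β α)
    rw [inner_sub_left] at hlt ⊢
    linarith
  · exact hα.2.2 (α - β) hsub β hβ.1 hgt hβ.2.1 (sub_add_cancel α β)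

theorem inner_rootRefl_pos (hα : IsSimpleRoot Φ t α) (hγ : γ ∈ Φ) (hγt : 0 < ⟪γ, t⟫)
    (hγα : γ ∉ ℝ ∙ α) : 0 < ⟪rootRefl α γ, t⟫ := by
  set S := {β | IsSimpleRoot Φ t β} \ {α}
  have hSα : ∀ s ∈ S, ⟪s, α⟫ ≤ 0 := fun s hs => hs.1.inner_nonpos hΦ ht hα hs.2
  have hSt : ∀ s ∈ S, 0 < ⟪s, t⟫ := fun s hs => hs.1.2.1
  have hγ' := hΦ.rootRefl_apply_mem hα.1 hγ
  by_contra! hneg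
  have hγ't : 0 < ⟪-rootRefl α γ, t⟫ := by
    rw [inner_neg_left]
    linarith [(ht _ hγ').lt_of_le hneg]
  obtain ⟨v, hv, hvα⟩ := hα.exists_mem_closure_sub_mem_span hΦ.finite hγ hγt
  obtain ⟨v', hv', hv'α⟩ :=
    hα.exists_mem_closure_sub_mem_span hΦ.finite (hΦ.neg_mem _ hγ') hγ't
  -- `v + v'` is a multiple `r • α`; pairing with `α` gives `r ≤ 0`, pairing with `t` gives `r ≥ 0`
  obtain ⟨r, hr⟩ := mem_span_singleton.mp <| show v + v' ∈ ℝ ∙ α by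
    have : γ - rootRefl α γ ∈ ℝ ∙ α := by
      rw [rootRefl_apply, sub_sub_cancel]
      exact smul_mem _ _ (mem_span_singleton_self α)
    convert sub_mem this (add_mem hvα hv'α) using 1
    abel
  have hαα : 0 < ⟪α, α⟫ := real_inner_self_pos.mpr (hΦ.ne_zero hα.1)
  have hr0 : r ≤ 0 := by
    have := inner_nonpos_of_mem_closure hSα (add_mem hv hv')
    rw [← hr, real_inner_smul_left] at this
    nlinarith
  have hvv' : v + v' = 0 := by
    by_contra h
    have := inner_pos_of_mem_closure hSt (add_mem hv hv') h
    rw [← hr, real_inner_smul_left] at this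
    nlinarith [hα.2.1]
  have hv0 : v = 0 := by
    by_contra h
    have h1 := inner_pos_of_mem_closure hSt hv h
    rw [eq_neg_of_add_eq_zero_right hvv'] at hv'
    have h2 := inner_pos_of_mem_closure hSt hv' (neg_ne_zero.mpr h)
    rw [inner_neg_left] at h2
    linarith
  exact hγα (by simpa [hv0] using hvα)

end IsSimpleRoot

end SimpleRoots

section SimpleWords

variable {V : Type*} [NormedAddCommGroup V] [InnerProductSpace ℝ V] {Φ : Set V} {t : V}
  (hΦ : IsRootSystem Φ) (ht : ∀ γ ∈ Φ, ⟪γ, t⟫ ≠ 0)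
include hΦ ht

theorem exists_simple_word_eq_rootRefl {γ : V} (hγ : γ ∈ Φ) :
    ∃ l : List V, (∀ α ∈ l, IsSimpleRoot Φ t α) ∧ reflProd l = rootRefl γ := by
  wlog hγt : 0 < ⟪γ, t⟫ generalizing γ
  · rw [← rootRefl_neg]
    refine this (hΦ.neg_mem γ hγ) ?_
    rw [inner_neg_left, neg_pos]
    exact (ht γ hγ).lt_of_le (not_lt.mp hγt)
  revert hγt
  refine hΦ.finite.induction_on_lt (P := fun γ => 0 < ⟪γ, t⟫ →
    ∃ l : List V, (∀ α ∈ l, IsSimpleRoot Φ t α) ∧ reflProd l = rootRefl γ) (⟪·, t⟫)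
    (fun γ hγ ih hγt => ?_) γ hγ
  obtain ⟨α, hα, hγα⟩ := exists_isSimpleRoot_inner_pos hΦ.finite hγ hγt
  by_cases hspan : γ ∈ ℝ ∙ α
  · refine ⟨[α], by simpa using hα, ?_⟩
    simp [rootRefl_eq_of_mem_span_singleton hspan (hΦ.ne_zero hγ)]
  -- otherwise `γ = s_α γ'` for the lower positive root `γ' = s_α γ`
  have hγ't : ⟪rootRefl α γ, t⟫ < ⟪γ, t⟫ := by
    have hαα : 0 < ⟪α, α⟫ := real_inner_self_pos.mpr (hΦ.ne_zero hα.1)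
    have : 0 < 2 * ⟪γ, α⟫ / ⟪α, α⟫ * ⟪α, t⟫ := by have := hα.2.1; positivity
    rw [rootRefl_apply, inner_sub_left, real_inner_smul_left]
    linarith
  obtain ⟨l, hl, hlγ'⟩ := ih _ (hΦ.rootRefl_apply_mem hα.1 hγ) hγ't
    (hα.inner_rootRefl_pos hΦ ht hγ hγt hspan)
  refine ⟨α :: l ++ [α], List.forall_mem_cons.mpr ⟨hα, List.forall_mem_append.mpr
    ⟨hl, List.forall_mem_singleton.mpr hα⟩⟩, ?_⟩
  rw [List.cons_append, reflProd_cons, reflProd_append, hlγ', ← mul_assoc, mul_rootRefl,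
      rootRefl_rootRefl]
  simp [mul_assoc]

theorem exists_simple_word_eq_reflProd {L : List V} (hL : ∀ γ ∈ L, γ ∈ Φ) :
    ∃ l : List V, (∀ α ∈ l, IsSimpleRoot Φ t α) ∧ reflProd l = reflProd L := by
  induction L with
  | nil => exact ⟨[], by simp, rfl⟩
  | cons γ L ih =>
    rw [List.forall_mem_cons] at hL
    obtain ⟨l₁, hl₁, h₁⟩ := exists_simple_word_eq_rootRefl hΦ ht hL.1
    obtain ⟨l₂, hl₂, h₂⟩ := ih hL.2
    exact ⟨l₁ ++ l₂, List.forall_mem_append.mpr ⟨hl₁, hl₂⟩,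
      by rw [reflProd_append, h₁, h₂, reflProd_cons]⟩

/-- The exchange condition. -/
theorem exists_simple_word_eq_mul_rootRefl {l : List V} (hl : ∀ β ∈ l, IsSimpleRoot Φ t β)
    {α : V} (hα : IsSimpleRoot Φ t α) (hneg : ⟪reflProd l α, t⟫ < 0) :
    ∃ l' : List V, (∀ β ∈ l', IsSimpleRoot Φ t β) ∧ l'.length + 1 = l.length ∧
      reflProd l' = reflProd l * rootRefl α := by
  induction l with
  | nil => exact absurd hα.2.1 (by simpa using hneg.le)
  | cons β m ih =>
    rw [List.forall_mem_cons] at hl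
    by_cases hm : ⟪reflProd m α, t⟫ < 0
    · obtain ⟨m', hm', hlen, hprod⟩ := ih hl.2 hm
      refine ⟨β :: m', List.forall_mem_cons.mpr ⟨hl.1, hm'⟩, by simp [hlen], ?_⟩
      rw [reflProd_cons, hprod, reflProd_cons, mul_assoc]
    -- `reflProd m α` is a positive root sent to a negative one by `s_β`, so it is a multiple of `β`
    have hmα := hΦ.reflProd_apply_mem (fun γ hγ => (hl.2 γ hγ).1) hα.1
    have hspan : reflProd m α ∈ ℝ ∙ β := by
      by_contra hspan
      refine hneg.not_gt ?_
      rw [reflProd_cons, LinearIsometryEquiv.coe_mul, Function.comp_apply]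
      exact hl.1.inner_rootRefl_pos hΦ ht hmα ((ht _ hmα).lt_of_le' (not_lt.mp hm)) hspan
    refine ⟨m, hl.2, rfl, ?_⟩
    rw [reflProd_cons, mul_assoc, mul_rootRefl,
      rootRefl_eq_of_mem_span_singleton hspan (hΦ.ne_zero hmα), ← mul_assoc, rootRefl_mul_self,
      one_mul]

theorem reflProd_eq_one_of_simple_word {l : List V} (hl : ∀ α ∈ l, IsSimpleRoot Φ t α)
    (hfix : reflProd l t = t) : reflProd l = 1 := by
  induction h : l.length using Nat.strong_induction_on generalizing l with
  | _ n ih =>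
  rcases l.eq_nil_or_concat' with rfl | ⟨m, α, rfl⟩
  · rfl
  simp only [List.mem_append, List.mem_singleton] at hl
  have hα : IsSimpleRoot Φ t α := hl α (.inr rfl)
  have hm : ∀ β ∈ m, IsSimpleRoot Φ t β := fun β hβ => hl β (.inl hβ)
  -- the word fixes `t`, so it maps the positive root `α` to a positive root
  have hneg : ⟪reflProd m α, t⟫ < 0 := by
    have := (reflProd (m ++ [α])).inner_map_map α t
    rw [hfix] at this
    simp only [reflProd_append, reflProd_cons, reflProd_nil, mul_one,
      LinearIsometryEquiv.coe_mul, Function.comp_apply, rootRefl_apply_self, map_neg,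
      inner_neg_left] at this
    linarith [hα.2.1]
  obtain ⟨m', hm', hlen, hprod⟩ := exists_simple_word_eq_mul_rootRefl hΦ ht hm hα hneg
  have hw : reflProd (m ++ [α]) = reflProd m' := by simp [hprod]
  rw [hw] at hfix ⊢
  exact ih m'.length (by simp at h; omega) hm' hfix rfl

end SimpleWords

namespace IsRootSystem

variable {V : Type*} [NormedAddCommGroup V] [InnerProductSpace ℝ V] {Φ : Set V}
  (hΦ : IsRootSystem Φ)
include hΦ

theorem reflProd_eq_one_of_apply_eq_self {L : List V} (hL : ∀ γ ∈ L, γ ∈ Φ) {t : V}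
    (ht : ∀ γ ∈ Φ, ⟪γ, t⟫ ≠ 0) (hfix : reflProd L t = t) : reflProd L = 1 := by
  obtain ⟨l, hl, hlL⟩ := exists_simple_word_eq_reflProd hΦ ht hL
  rw [← hlL] at hfix ⊢
  exact reflProd_eq_one_of_simple_word hΦ ht hl hfix

/-- If every root pairs nontrivially with the fixed space, a generic fixed vector is regular,
and only `1` fixes a regular vector. -/
theorem exists_mem_orthogonal_fixedSpace {L : List V} (hL : ∀ γ ∈ L, γ ∈ Φ)
    (hw : reflProd L ≠ 1) : ∃ γ ∈ Φ, γ ∈ (fixedSpace (reflProd L))ᗮ := by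
  by_contra! h
  have : Finite Φ := hΦ.finite.to_subtype
  obtain ⟨t, htF, ht⟩ := Module.Dual.exists_forall_mem_ne_zero_of_forall_exists
    (fixedSpace (reflProd L)) (fun γ : Φ => innerₗ V (γ : V)) fun γ => by
      simpa [mem_orthogonal'] using h γ γ.2
  exact hw (hΦ.reflProd_eq_one_of_apply_eq_self hL (fun γ hγ => ht ⟨γ, hγ⟩)
    (mem_fixedSpace.mp htF))

variable [FiniteDimensional ℝ V]

theorem exists_rootRefl_mul_finrank_fixedSpace_lt {L : List V} (hL : ∀ γ ∈ L, γ ∈ Φ)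
    (hw : reflProd L ≠ 1) : ∃ γ ∈ Φ, finrank ℝ (fixedSpace (reflProd L)) <
      finrank ℝ (fixedSpace (rootRefl γ * reflProd L)) := by
  obtain ⟨γ, hγ, hγF⟩ := hΦ.exists_mem_orthogonal_fixedSpace hL hw
  exact ⟨γ, hγ, finrank_lt_finrank_of_lt
    (fixedSpace_lt_fixedSpace_rootRefl_mul hγF (hΦ.ne_zero hγ))⟩

/-- Carter's Lemma 2. Multiplying by the reflection in a root orthogonal to the fixed space
enlarges the fixed space, so the codimension bounds the number of reflections needed. -/
theorem exists_reflProd_eq_of_finrank_le (d : ℕ) {L : List V} (hL : ∀ γ ∈ L, γ ∈ Φ)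
    (hd : finrank ℝ V ≤ d + finrank ℝ (fixedSpace (reflProd L))) :
    ∃ L' : List V, (∀ γ ∈ L', γ ∈ Φ) ∧ L'.length ≤ d ∧ reflProd L' = reflProd L := by
  induction d generalizing L with
  | zero =>
    refine ⟨[], by simp, le_rfl, ?_⟩
    by_contra hw
    obtain ⟨γ, -, hlt⟩ := hΦ.exists_rootRefl_mul_finrank_fixedSpace_lt hL (Ne.symm hw)
    have := (fixedSpace (rootRefl γ * reflProd L)).finrank_le
    omega
  | succ d ih =>
    by_cases hw : reflProd L = 1
    · exact ⟨[], by simp, by simp, hw.symm⟩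
    obtain ⟨γ, hγ, hlt⟩ := hΦ.exists_rootRefl_mul_finrank_fixedSpace_lt hL hw
    obtain ⟨L', hL', hlen, hprod⟩ := ih (L := γ :: L) (List.forall_mem_cons.mpr ⟨hγ, hL⟩)
      (by rw [reflProd_cons]; omega)
    refine ⟨γ :: L', List.forall_mem_cons.mpr ⟨hγ, hL'⟩, by simpa using hlen, ?_⟩
    rw [reflProd_cons, hprod, reflProd_cons, ← mul_assoc, rootRefl_mul_self, one_mul]

end IsRootSystem

/-- Carter's Lemma 3: `s_{α₁} ⋯ s_{α_k}` has Carter length exactly `k`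
(it cannot be written as a product of fewer than `k` root reflections)
iff the roots `α₁, …, α_k` are linearly independent. -/
theorem carter_length_eq_iff_linearIndependent
    {V : Type*} [NormedAddCommGroup V] [InnerProductSpace ℝ V] [FiniteDimensional ℝ V]
    (Φ : Set V) (hΦ : IsRootSystem Φ) (k : ℕ) (α : Fin k → V) (hα : ∀ i, α i ∈ Φ) :
    (∀ (m : ℕ) (β : Fin m → V), (∀ i, β i ∈ Φ) →
        (List.ofFn fun i => sRefl (β i)).prod = (List.ofFn fun i => sRefl (α i)).prod →
        k ≤ m)
      ↔ LinearIndependent ℝ α := by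
  simp only [prod_ofFn_sRefl_eq_iff]
  constructor
  · intro H
    by_contra hdep
    have hspan : finrank ℝ (span ℝ (range α)) < k := by
      by_contra! h
      exact hdep (linearIndependent_iff_card_le_finrank_span.mpr (by simpa [Set.finrank] using h))
    obtain ⟨L, hL, hlen, hprod⟩ := hΦ.exists_reflProd_eq_of_finrank_le (k - 1)
      (L := List.ofFn α) (by simpa [List.mem_ofFn] using hα)
      (by have := finrank_le_finrank_span_add_finrank_fixedSpace α; omega)
    have := H L.length L.get (fun i => hL _ (L.get_mem i)) (by rwa [List.ofFn_get])
    omega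
  · intro hind m β _ hprod
    have h₁ := Submodule.finrank_mono (span_le_orthogonal_fixedSpace_of_linearIndependent hind)
    have h₂ := finrank_le_finrank_span_add_finrank_fixedSpace β
    have h₃ := (fixedSpace (reflProd (List.ofFn α))).finrank_add_finrank_orthogonal
    have h₄ := finrank_range_le_card (R := ℝ) β
    rw [finrank_span_eq_card hind, hprod] at *
    simp only [Fintype.card_fin, Set.finrank] at *
    omega
end

section
/- The 4×4 matrix w with rows (1,0,−1,−1), (0,1,1,−1), (1,−1,−1,0), (1,1,0,−1) has characteristic polynomial x⁴ + 2x² + 1, and the 4×4 matrix w_Ω with rows (0,1,0,0), (1,0,−1,−1), (0,0,0,1), (1,1,0,−1) has characteristic polynomial x⁴ + x³ + x + 1. In particular, w and w_Ω are not conjugate. -/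
open Polynomial

/-- The matrix of `w = s_{α₁}s_{α₂}s_{β₁}s_{β₂}` in the basis `{α₁, α₂, β₁, β₂}`. -/
def wMat : Matrix (Fin 4) (Fin 4) ℚ :=
  !![1, 0, -1, -1;
     0, 1,  1, -1;
     1, -1, -1, 0;
     1, 1,  0, -1]

/-- The matrix of `w_Ω = s_{α₁}s_{β₁}s_{α₂}s_{β₂}` in the basis `{α₁, α₂, β₁, β₂}`. -/
def wOmegaMat : Matrix (Fin 4) (Fin 4) ℚ :=
  !![0, 1, 0, 0;
     1, 0, -1, -1;
     0, 0, 0, 1;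
     1, 1, 0, -1]

theorem Matrix.charpoly_conj_of_isUnit {n R : Type*} [Fintype n] [DecidableEq n] [CommRing R]
    {u : Matrix n n R} (hu : IsUnit u) (M : Matrix n n R) :
    (u * M * u⁻¹).charpoly = M.charpoly := by
  rw [← hu.unit_spec, charpoly_units_conj]

theorem wMat_charpoly : wMat.charpoly = X ^ 4 + 2 * X ^ 2 + 1 := by
  simp [Matrix.charpoly, Matrix.det_succ_row_zero, Fin.sum_univ_succ, wMat,
    Matrix.charmatrix_apply, Fin.succAbove]
  ring

theorem wOmegaMat_charpoly : wOmegaMat.charpoly = X ^ 4 + X ^ 3 + X + 1 := by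
  simp [Matrix.charpoly, Matrix.det_succ_row_zero, Fin.sum_univ_succ, wOmegaMat,
    Matrix.charmatrix_apply, Fin.succAbove]
  ring

/-- `w` has characteristic polynomial `x⁴ + 2x² + 1`, `w_Ω` has characteristic polynomial
`x⁴ + x³ + x + 1`; in particular `w` and `w_Ω` are not conjugate. -/
theorem charpoly_w_wOmega_and_not_conjugate :
    wMat.charpoly = X ^ 4 + 2 * X ^ 2 + 1 ∧
    wOmegaMat.charpoly = X ^ 4 + X ^ 3 + X + 1 ∧
    ¬ ∃ u : Matrix (Fin 4) (Fin 4) ℚ, IsUnit u ∧ wOmegaMat = u * wMat * u⁻¹ := by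
  refine ⟨wMat_charpoly, wOmegaMat_charpoly, ?_⟩
  rintro ⟨u, hu, hconj⟩
  have hcharpoly := Matrix.charpoly_conj_of_isUnit hu wMat
  rw [← hconj, wMat_charpoly, wOmegaMat_charpoly] at hcharpoly
  simpa [coeff_X] using congrArg (coeff · 3) hcharpoly
end

section
/- In a graph whose cycles each contain an odd number of dotted edges, there cannot exist three vertices α₁, α₂, α₃ and two non-adjacent vertices β, γ such that β and γ are each adjacent to all three α_i. -/
/-!
Each `αᵢ` gives a path `β → αᵢ → γ`; let `wᵢ` be its number of dotted edges. For `i ≠ j` the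
two paths close up to a 4-cycle with `wᵢ + wⱼ` dotted edges, which must be odd. But two of
the three numbers `wᵢ` have the same parity, so one of these sums is even.
-/

open SimpleGraph

theorem Nat.exists_ne_even_add {ι : Type*} [Fintype ι] (hι : 2 < Fintype.card ι) (f : ι → ℕ) :
    ∃ i j, i ≠ j ∧ Even (f i + f j) := by
  obtain ⟨i, j, hij, hparity⟩ :=
    Fintype.exists_ne_map_eq_of_card_lt (fun i => decide (Even (f i))) (by simpa using hι)
  exact ⟨i, j, hij, Nat.even_add.mpr (by simpa using hparity)⟩

namespace SimpleGraph.Walk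

variable {V : Type*} {G : SimpleGraph V} {u v : V}

theorem countP_edges_append_reverse (p q : G.Walk u v) (f : Sym2 V → Bool) :
    (p.append q.reverse).edges.countP f = p.edges.countP f + q.edges.countP f := by
  rw [edges_append, edges_reverse, List.countP_append, List.countP_reverse]

theorem isCycle_append_reverse_of_common_neighbors {a b : V} (hua : G.Adj u a) (hav : G.Adj a v)
    (hub : G.Adj u b) (hbv : G.Adj b v) (huv : u ≠ v) (hab : a ≠ b) :
    ((cons hua hav.toWalk).append (cons hub hbv.toWalk).reverse).IsCycle := by
  have hpath : ∀ {c : V} (huc : G.Adj u c) (hcv : G.Adj c v), (cons huc hcv.toWalk).IsPath :=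
    fun huc hcv => by simp [huc.ne, hcv.ne, huv]
  refine (hpath hua hav).isCycle_append (hpath hub hbv).reverse ?_ (by simp)
  simp [hab.symm, hbv.ne, hua.ne, huv]

end SimpleGraph.Walk

theorem no_three_alpha_endpoints_general
    {V : Type*} (G : SimpleGraph V)
    (D : Set (Sym2 V)) [DecidablePred (· ∈ D)]
    (hodd : ∀ (v : V) (c : G.Walk v v), c.IsCycle →
        Odd (c.edges.countP fun e => decide (e ∈ D))) :
    ¬ ∃ (α : Fin 3 → V) (β γ : V),
        Function.Injective α ∧ β ≠ γ ∧ ¬ G.Adj β γ ∧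
        (∀ i, G.Adj β (α i)) ∧ (∀ i, G.Adj γ (α i)) := by
  rintro ⟨α, β, γ, hα, hβγ, -, hβ, hγ⟩
  let path (i : Fin 3) : G.Walk β γ := .cons (hβ i) (hγ i).symm.toWalk
  obtain ⟨i, j, hij, heven⟩ :=
    Nat.exists_ne_even_add (by simp) fun i => (path i).edges.countP fun e => decide (e ∈ D)
  have hcycle := Walk.isCycle_append_reverse_of_common_neighbors
    (hβ i) (hγ i).symm (hβ j) (hγ j).symm hβγ (hα.ne hij)
  have hodd_sum := hodd β _ hcycle
  rw [Walk.countP_edges_append_reverse] at hodd_sum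
  exact Nat.not_even_iff_odd.mpr hodd_sum heven

/-- In a graph in which every cycle contains an odd number of dotted edges, there cannot
exist three distinct vertices `α₁, α₂, α₃` and two non-adjacent vertices `β, γ` with `β`
and `γ` each adjacent to all three `α_i`. -/
theorem no_three_alpha_endpoints
    {V : Type*} [Fintype V] [DecidableEq V] (G : SimpleGraph V)
    (D : Set (Sym2 V)) [DecidablePred (· ∈ D)]
    (hodd : ∀ (v : V) (c : G.Walk v v), c.IsCycle →
        Odd (c.edges.countP fun e => decide (e ∈ D))) :
    ¬ ∃ (α : Fin 3 → V) (β γ : V),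
        Function.Injective α ∧ β ≠ γ ∧ ¬ G.Adj β γ ∧
        (∀ i, G.Adj β (α i)) ∧ (∀ i, G.Adj γ (α i)) :=
  no_three_alpha_endpoints_general G D hodd
end

section
/- In a graph whose cycles each contain an odd number of dotted edges, there cannot exist a 4-cycle {α₁, β₁, α₂, β₂} together with a vertex γ adjacent to all four vertices of the cycle. -/
/-!
The four triangles `γ αᵢ βⱼ` and the square `α₁ β₁ α₂ β₂` are cycles, and every edge of this
wheel lies on exactly two of them. Hence the five cycles contain an even number of dotted edges
in total, although each of them contains an odd number.
-/

namespace SimpleGraph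

variable {V : Type*} {G : SimpleGraph V}

lemma isCycle_triangle {a b c : V} (hab : G.Adj a b) (hbc : G.Adj b c) (hca : G.Adj c a) :
    (Walk.cons hab (Walk.cons hbc (Walk.cons hca Walk.nil))).IsCycle := by
  have := hab.ne; have := hbc.ne; have := hca.ne
  simp [Walk.isCycle_def, Walk.isTrail_def]
  tauto

lemma isCycle_square {a b c d : V} (hab : G.Adj a b) (hbc : G.Adj b c) (hcd : G.Adj c d)
    (hda : G.Adj d a) (hac : a ≠ c) (hbd : b ≠ d) :
    (Walk.cons hab (Walk.cons hbc (Walk.cons hcd (Walk.cons hda Walk.nil)))).IsCycle := by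
  have := hab.ne; have := hbc.ne; have := hcd.ne; have := hda.ne
  simp [Walk.isCycle_def, Walk.isTrail_def]
  tauto

lemma even_countP_edges_wheel (p : Sym2 V → Bool) {a₁ b₁ a₂ b₂ c : V}
    (h₁₁ : G.Adj a₁ b₁) (h₁₂ : G.Adj b₁ a₂) (h₂₂ : G.Adj a₂ b₂) (h₂₁ : G.Adj b₂ a₁)
    (hca₁ : G.Adj c a₁) (hcb₁ : G.Adj c b₁) (hca₂ : G.Adj c a₂) (hcb₂ : G.Adj c b₂) :
    Even ((Walk.cons hca₁ (Walk.cons h₁₁ (Walk.cons hcb₁.symm Walk.nil))).edges.countP p +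
      (Walk.cons hcb₁ (Walk.cons h₁₂ (Walk.cons hca₂.symm Walk.nil))).edges.countP p +
      (Walk.cons hca₂ (Walk.cons h₂₂ (Walk.cons hcb₂.symm Walk.nil))).edges.countP p +
      (Walk.cons hcb₂ (Walk.cons h₂₁ (Walk.cons hca₁.symm Walk.nil))).edges.countP p +
      (Walk.cons h₁₁ (Walk.cons h₁₂ (Walk.cons h₂₂ (Walk.cons h₂₁ Walk.nil)))).edges.countP p) := by
  simp only [Walk.edges_cons, Walk.edges_nil, List.countP_cons, List.countP_nil, Sym2.eq_swap]
  rw [Nat.even_iff]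
  omega

end SimpleGraph

open SimpleGraph in
theorem no_vertex_adjacent_to_square_general
    {V : Type*} (G : SimpleGraph V)
    (D : Set (Sym2 V)) [DecidablePred (· ∈ D)]
    (hodd : ∀ (v : V) (c : G.Walk v v), c.IsCycle →
        Odd (c.edges.countP fun e => decide (e ∈ D))) :
    ¬ ∃ (α₁ β₁ α₂ β₂ γ : V),
        α₁ ≠ α₂ ∧ β₁ ≠ β₂ ∧
        G.Adj α₁ β₁ ∧ G.Adj β₁ α₂ ∧ G.Adj α₂ β₂ ∧ G.Adj β₂ α₁ ∧
        G.Adj γ α₁ ∧ G.Adj γ β₁ ∧ G.Adj γ α₂ ∧ G.Adj γ β₂ := by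
  rintro ⟨α₁, β₁, α₂, β₂, γ, hα, hβ, h₁₁, h₁₂, h₂₂, h₂₁, hγα₁, hγβ₁, hγα₂, hγβ₂⟩
  have hT₁ := hodd γ _ (isCycle_triangle hγα₁ h₁₁ hγβ₁.symm)
  have hT₂ := hodd γ _ (isCycle_triangle hγβ₁ h₁₂ hγα₂.symm)
  have hT₃ := hodd γ _ (isCycle_triangle hγα₂ h₂₂ hγβ₂.symm)
  have hT₄ := hodd γ _ (isCycle_triangle hγβ₂ h₂₁ hγα₁.symm)
  have hS := hodd α₁ _ (isCycle_square h₁₁ h₁₂ h₂₂ h₂₁ hα hβ)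
  have hsum_odd := (((hT₁.add_odd hT₂).add_odd hT₃).add_odd hT₄).add_odd hS
  exact Nat.not_even_iff_odd.mpr hsum_odd
    (even_countP_edges_wheel _ h₁₁ h₁₂ h₂₂ h₂₁ hγα₁ hγβ₁ hγα₂ hγβ₂)

/-- In a graph in which every cycle contains an odd number of dotted edges, there cannot
exist a 4-cycle `α₁, β₁, α₂, β₂` together with a vertex `γ` adjacent to all four of its
vertices. -/
theorem no_vertex_adjacent_to_square
    {V : Type*} [Fintype V] [DecidableEq V] (G : SimpleGraph V)
    (D : Set (Sym2 V)) [DecidablePred (· ∈ D)]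
    (hodd : ∀ (v : V) (c : G.Walk v v), c.IsCycle →
        Odd (c.edges.countP fun e => decide (e ∈ D))) :
    ¬ ∃ (α₁ β₁ α₂ β₂ γ : V),
        α₁ ≠ α₂ ∧ β₁ ≠ β₂ ∧
        G.Adj α₁ β₁ ∧ G.Adj β₁ α₂ ∧ G.Adj α₂ β₂ ∧ G.Adj β₂ α₁ ∧
        G.Adj γ α₁ ∧ G.Adj γ β₁ ∧ G.Adj γ α₂ ∧ G.Adj γ β₂ :=
  no_vertex_adjacent_to_square_general G D hodd
end
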